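/- arXiv:1303.3728 — 2 statements merged into one kernel-verified Lean document; each statement's English description precedes it below -/
import Mathlib

section
/- Let A(m,k) = (2k+1)/(2m+1) · C(2m+1, m-k) and B(k,ℓ) = (-1)^{k+ℓ} C(k+ℓ, 2ℓ). Then for all integers m, b, ℓ with m ≥ b ≥ ℓ+1 ≥ 1 and m > ℓ: the sum over k from ℓ to b-1 of A(m,k)·B(k,ℓ) equals (-1)^{b-ℓ-1} · (b-ℓ)/(m-ℓ) · C(2m, m-b) · C(b+ℓ, 2ℓ). -/
def matA (m k : ℕ) : ℚ :=
  (2 * k + 1 : ℚ) / (2 * m + 1) * (Nat.choose (2 * m + 1) (m - k) : ℚ)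

def matB (n m : ℕ) : ℚ :=
  (-1 : ℚ) ^ (n + m) * (Nat.choose (n + m) (2 * m) : ℚ)

/-!
The summand `matA m k * matB k ℓ` is the forward difference `F (k + 1) - F k` of
`F b = (-1)^(b+ℓ+1) (b - ℓ)/(m - ℓ) C(2m, m-b) C(b+ℓ, 2ℓ)`, which vanishes at `b = ℓ`, so the sum
telescopes to `F b`. Expressing every binomial through `C(2m, m-k-1)` and `C(k+ℓ, 2ℓ)`, the
difference identity reduces to `(k+ℓ+1)(m-k) + (k-ℓ)(m+k+1) = (2k+1)(m-ℓ)`.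
-/

open Finset

theorem Nat.cast_choose_succ_right_mul {K : Type*} [CommRing K] (n k : ℕ) :
    (n.choose (k + 1) : K) * (k + 1) = n.choose k * (n - k) := by
  rcases le_or_gt k n with hkn | hnk
  · simpa [Nat.cast_sub hkn] using congrArg (Nat.cast (R := K)) (Nat.choose_succ_right_eq n k)
  · simp [Nat.choose_eq_zero_of_lt hnk, Nat.choose_eq_zero_of_lt (hnk.trans k.lt_succ_self)]

theorem Nat.cast_choose_mul_succ {K : Type*} [CommRing K] (n k : ℕ) :
    (n.choose k : K) * (n + 1) = (n + 1).choose k * (n + 1 - k) := by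
  rcases le_or_gt k (n + 1) with hkn | hnk
  · simpa [Nat.cast_sub hkn] using congrArg (Nat.cast (R := K)) (Nat.choose_mul_succ_eq n k)
  · simp [Nat.choose_eq_zero_of_lt hnk, Nat.choose_eq_zero_of_lt (n.lt_succ_self.trans hnk)]

/-- The sign is written `(-1)^(b+ℓ+1)` rather than `(-1)^(b-ℓ-1)` to avoid truncated
subtraction; the two agree for `b > ℓ`. -/
def primitiveAB (m ℓ b : ℕ) : ℚ :=
  (-1 : ℚ) ^ (b + ℓ + 1) * ((b : ℚ) - ℓ) / ((m : ℚ) - ℓ) *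
    (Nat.choose (2 * m) (m - b) : ℚ) * (Nat.choose (b + ℓ) (2 * ℓ) : ℚ)

theorem primitiveAB_self (m ℓ : ℕ) : primitiveAB m ℓ ℓ = 0 := by
  simp [primitiveAB]

theorem primitiveAB_succ_sub {m ℓ k : ℕ} (hℓk : ℓ ≤ k) (hkm : k < m) :
    primitiveAB m ℓ (k + 1) - primitiveAB m ℓ k = matA m k * matB k ℓ := by
  obtain ⟨j, rfl⟩ : ∃ j, m = k + 1 + j := ⟨m - (k + 1), by omega⟩
  have hj : k + 1 + j - k = j + 1 := by omega
  have hj' : k + 1 + j - (k + 1) = j := by omega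
  have hℓ : (ℓ : ℚ) ≤ k := by exact_mod_cast hℓk
  have hmℓ : (k + 1 + j : ℚ) - ℓ ≠ 0 := by linarith
  have hkℓ : (k + 1 : ℚ) - ℓ ≠ 0 := by linarith
  have hX1 : (Nat.choose (2 * (k + 1 + j)) (j + 1) : ℚ) =
      (k + 1 + j + k + 1) * Nat.choose (2 * (k + 1 + j)) j / (j + 1) := by
    rw [eq_div_iff (by positivity)]
    have := Nat.cast_choose_succ_right_mul (K := ℚ) (2 * (k + 1 + j)) j
    push_cast at this
    linear_combination this
  have hX2 : (Nat.choose (2 * (k + 1 + j) + 1) (j + 1) : ℚ) =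
      (2 * (k + 1 + j) + 1) * Nat.choose (2 * (k + 1 + j)) j / (j + 1) := by
    rw [eq_div_iff (by positivity)]
    exact_mod_cast (Nat.add_one_mul_choose_eq _ _).symm
  have hY : (Nat.choose (k + 1 + ℓ) (2 * ℓ) : ℚ) =
      (k + ℓ + 1) * Nat.choose (k + ℓ) (2 * ℓ) / (k + 1 - ℓ) := by
    rw [eq_div_iff hkℓ, show k + 1 + ℓ = k + ℓ + 1 by ring]
    have := Nat.cast_choose_mul_succ (K := ℚ) (k + ℓ) (2 * ℓ)
    push_cast at this
    linear_combination -this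
  simp only [primitiveAB, matA, matB, hj, hj', hX1, hX2, hY]
  push_cast
  field_simp
  ring

theorem sum_Ico_matA_mul_matB {m ℓ b : ℕ} (hℓb : ℓ ≤ b) (hbm : b ≤ m) :
    ∑ k ∈ Ico ℓ b, matA m k * matB k ℓ = primitiveAB m ℓ b := by
  rw [← sub_zero (primitiveAB m ℓ b), ← primitiveAB_self m ℓ, ← sum_Ico_sub _ hℓb]
  refine sum_congr rfl fun k hk => ?_
  rw [mem_Ico] at hk
  exact (primitiveAB_succ_sub hk.1 (by omega)).symm

theorem hypergeometric_identity_one :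
    ∀ m b ℓ : ℕ, b ≤ m → ℓ + 1 ≤ b → ℓ < m →
      (∑ k ∈ Finset.Icc ℓ (b - 1), matA m k * matB k ℓ) =
        (-1 : ℚ) ^ (b - ℓ - 1) * ((b : ℚ) - ℓ) / ((m : ℚ) - ℓ) *
          (Nat.choose (2 * m) (m - b) : ℚ) * (Nat.choose (b + ℓ) (2 * ℓ) : ℚ) := by
  intro m b ℓ hbm hℓb _
  have hsign : b + ℓ + 1 = (b - ℓ - 1) + 2 * (ℓ + 1) := by omega
  have hb : ¬IsMin b := by simp only [isMin_iff_eq_bot, Nat.bot_eq_zero]; omega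
  rw [Icc_sub_one_right_eq_Ico_of_not_isMin hb, sum_Ico_matA_mul_matB (by omega) hbm,
    primitiveAB, hsign, pow_add, pow_mul, neg_one_sq, one_pow, mul_one]
end

section
/- Let A(m,k) = (2k+1)/(2m+1) · C(2m+1, m-k). Then for all integers m ≥ b ≥ 0 and j ≥ b+1: the sum over k from b to m of A(m,k) · C(2j-1, j+k) equals (b+j)/(m+j) · C(2m, m-b) · C(2j-1, j+b). -/
open Finset

theorem Nat.cast_choose_succ_mul {R : Type*} [CommRing R] (n r : ℕ) :
    (n.choose (r + 1) : R) * (r + 1) = n.choose r * (n - r) := by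
  rcases le_or_gt r n with hr | hr
  · have h := congrArg (Nat.cast (R := R)) (Nat.choose_succ_right_eq n r)
    push_cast [Nat.cast_sub hr] at h
    exact h
  · simp [Nat.choose_eq_zero_of_lt hr, Nat.choose_eq_zero_of_lt (hr.trans (Nat.lt_succ_self r))]

theorem Finset.sum_Icc_eq_of_telescoping {G : Type*} [AddCommGroup G] {f F : ℕ → G} {b m : ℕ}
    (hbm : b ≤ m) (hstep : ∀ k ∈ Ico b m, f k = F k - F (k + 1)) (htop : f m = F m) :
    ∑ k ∈ Icc b m, f k = F b := by
  have hsum := sum_Ico_sub F hbm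
  rw [sum_sub_distrib, eq_sub_iff_add_eq] at hsum
  rw [← Ico_add_one_right_eq_Icc, sum_Ico_succ_top hbm, sum_congr rfl hstep, htop, ← hsum,
    sum_sub_distrib]
  abel

def matATail (m j b : ℕ) : ℚ :=
  ((b : ℚ) + j) / ((m : ℚ) + j) * (Nat.choose (2 * m) (m - b) : ℚ) *
    (Nat.choose (2 * j - 1) (j + b) : ℚ)

theorem matA_self (m : ℕ) : matA m m = 1 := by
  have : (2 * m + 1 : ℚ) ≠ 0 := by positivity
  simp [matA, this]

theorem matA_mul_choose_eq_sub {m j k : ℕ} (hk : k < m) (hj : 1 ≤ j) :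
    matA m k * (Nat.choose (2 * j - 1) (j + k) : ℚ) = matATail m j k - matATail m j (k + 1) := by
  have ha : ((2 * m + 1).choose (m - k) : ℚ) =
      (2 * m + 1) / (m + k + 1) * (2 * m).choose (m - k) := by
    have h := congrArg (Nat.cast (R := ℚ)) (Nat.choose_mul_succ_eq (2 * m) (m - k))
    rw [show 2 * m + 1 - (m - k) = m + k + 1 by omega] at h
    push_cast at h
    field_simp
    linear_combination -h
  have hc : ((2 * m).choose (m - (k + 1)) : ℚ) =
      (m - k) / (m + k + 1) * (2 * m).choose (m - k) := by
    have h := Nat.cast_choose_succ_mul (R := ℚ) (2 * m) (m - (k + 1))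
    rw [show m - (k + 1) + 1 = m - k by omega] at h
    push_cast [Nat.cast_sub hk, Nat.cast_sub hk.le] at h
    field_simp
    linear_combination -h
  have hd : ((2 * j - 1).choose (j + (k + 1)) : ℚ) =
      (j - k - 1) / (j + k + 1) * (2 * j - 1).choose (j + k) := by
    have h := Nat.cast_choose_succ_mul (R := ℚ) (2 * j - 1) (j + k)
    push_cast [Nat.cast_sub (show 1 ≤ 2 * j by omega)] at h
    field_simp
    linear_combination h
  simp only [matA, matATail]
  rw [ha, hc, hd]
  push_cast
  field_simp
  ring

theorem hypergeometric_identity_two :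
    ∀ m b j : ℕ, b ≤ m → b + 1 ≤ j →
      (∑ k ∈ Finset.Icc b m, matA m k * (Nat.choose (2 * j - 1) (j + k) : ℚ)) =
        ((b : ℚ) + j) / ((m : ℚ) + j) * (Nat.choose (2 * m) (m - b) : ℚ) *
          (Nat.choose (2 * j - 1) (j + b) : ℚ) := by
  intro m b j hbm hbj
  have hj : 0 < j := by omega
  have hmj : (m + j : ℚ) ≠ 0 := by positivity
  refine sum_Icc_eq_of_telescoping (F := matATail m j) hbm
    (fun k hk => matA_mul_choose_eq_sub (mem_Ico.mp hk).2 (by omega)) ?_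
  simp [matATail, matA_self, hmj]
end
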